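/- arXiv:2410.17611 — 2 statements merged into one kernel-verified Lean document; each statement's English description precedes it below -/
import Mathlib

section
/- For r ≥ 2, the total mutual-visibility number and the dual mutual-visibility number of the glued binary tree GT(r) both equal 2^{r−1}. -/
open SimpleGraph

/-- Two vertices `u` and `v` are `S`-visible: there exists a shortest `u,v`-path
whose intersection with `S` is contained in `{u, v}`. -/
def isVisible {V : Type*} (G : SimpleGraph V) (S : Set V) (u v : V) : Prop :=
  ∃ p : G.Walk u v, p.IsPath ∧ p.length = G.dist u v ∧
    ∀ w ∈ p.support, w ∈ S → w = u ∨ w = v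

/-- Two vertices `u` and `v` are `S`-positionable: every shortest `u,v`-path
has its intersection with `S` contained in `{u, v}`. -/
def isPositionable {V : Type*} (G : SimpleGraph V) (S : Set V) (u v : V) : Prop :=
  ∀ p : G.Walk u v, p.IsPath → p.length = G.dist u v →
    ∀ w ∈ p.support, w ∈ S → w = u ∨ w = v

def isMVSet {V : Type*} (G : SimpleGraph V) (S : Set V) : Prop :=
  ∀ u ∈ S, ∀ v ∈ S, isVisible G S u v

def isOuterMVSet {V : Type*} (G : SimpleGraph V) (S : Set V) : Prop :=
  isMVSet G S ∧ ∀ u ∈ S, ∀ v ∉ S, isVisible G S u v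

def isDualMVSet {V : Type*} (G : SimpleGraph V) (S : Set V) : Prop :=
  isMVSet G S ∧ ∀ u ∉ S, ∀ v ∉ S, isVisible G S u v

def isTotalMVSet {V : Type*} (G : SimpleGraph V) (S : Set V) : Prop :=
  ∀ u v : V, isVisible G S u v

def isGPSet {V : Type*} (G : SimpleGraph V) (S : Set V) : Prop :=
  ∀ u ∈ S, ∀ v ∈ S, isPositionable G S u v

def isOuterGPSet {V : Type*} (G : SimpleGraph V) (S : Set V) : Prop :=
  isGPSet G S ∧ ∀ u ∈ S, ∀ v ∉ S, isPositionable G S u v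

def isDualGPSet {V : Type*} (G : SimpleGraph V) (S : Set V) : Prop :=
  isGPSet G S ∧ ∀ u ∉ S, ∀ v ∉ S, isPositionable G S u v

def isTotalGPSet {V : Type*} (G : SimpleGraph V) (S : Set V) : Prop :=
  ∀ u v : V, isPositionable G S u v

/-- Vertices of the generalized glued `t`-ary tree obtained from `n` copies of
the perfect `t`-ary tree of depth `r`: an internal vertex of copy `i` is encoded
as the list of child-choices from the root (length `< r`), and a quasi-leaf
(identified leaf) is encoded as such a list of length exactly `r`. -/
abbrev gluedVert (r n t : ℕ) : Type :=
  (Fin n × {l : List (Fin t) // l.length < r}) ⊕ {l : List (Fin t) // l.length = r}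

def gluedAdj (r n t : ℕ) : gluedVert r n t → gluedVert r n t → Prop
  | Sum.inl (i, s), Sum.inl (j, s') => i = j ∧ ∃ b, s'.val = s.val ++ [b]
  | Sum.inl (_, s), Sum.inr l => ∃ b, l.val = s.val ++ [b]
  | Sum.inr _, _ => False

/-- The generalized glued `t`-ary tree on `n` copies of the perfect `t`-ary tree
of depth `r`.  `gluedTree r 2 2` is the glued binary tree `GT(r)`,
`gluedTree r 2 t` is the glued `t`-ary tree `GT(r,t)`, and `gluedTree r n 2`
is the generalized glued binary tree `GT_r^(n)`. -/
def gluedTree (r n t : ℕ) : SimpleGraph (gluedVert r n t) :=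
  SimpleGraph.fromRel (gluedAdj r n t)

/-- The set of quasi-leaves. -/
def quasiLeaves (r n t : ℕ) : Set (gluedVert r n t) := {x | ∃ l, x = Sum.inr l}

/-- The vertex set of the `i`-th copy `T_r^(i)` of the perfect `t`-ary tree
(its internal vertices together with all quasi-leaves). -/
def copySet (r n t : ℕ) (i : Fin n) : Set (gluedVert r n t) :=
  {x | (∃ s, x = Sum.inl (i, s)) ∨ x ∈ quasiLeaves r n t}

/-!
Lower bound: twin quasi-leaves `s0` and `s1` have the same neighbourhood, so on a shortest path
every inner vertex ending in `0` can be replaced by its twin ending in `1`. Hence the `2^(r-1)`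
quasi-leaves ending in `0` form a total mutual-visibility set.

Upper bound: let `S` be a dual mutual-visibility set. A pair of vertices both in `S`, or both
outside `S`, must not have all of its shortest paths pass through `S`; we only use such pairs at
distance two or three. The two children (and a grandchild) of a vertex of `S` show that `S` has
no vertex of depth `≤ r - 2`. Then no two vertices of `S` are adjacent: otherwise `S` contains a
vertex `w` of depth `r - 1` and a quasi-leaf below it, hence (arguing through the parent of `w`)
both quasi-leaves below `w` and the other copy of `w`, and then the two quasi-leaves block each
other. Finally `S` meets each block `{(0, s), (1, s), s0, s1}` with `|s| = r - 1` at most once,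
since two vertices of `S` in a block would block the other two from each other.
-/

theorem List.ncard_length_eq (α : Type*) [Fintype α] (k : ℕ) :
    {l : List α | l.length = k}.ncard = Fintype.card α ^ k := by
  rw [← Nat.card_coe_set_eq, ← card_vector, ← Nat.card_eq_fintype_card]
  rfl

theorem Fin.eq_or_eq_of_ne {a b : Fin 2} (hab : a ≠ b) (c : Fin 2) : c = a ∨ c = b := by
  omega

section Visibility

variable {V : Type*} {G : SimpleGraph V} {S : Set V} {u v : V}

theorem isVisible_of_walk (p : G.Walk u v) (hp : p.length = G.dist u v)
    (hS : ∀ w ∈ p.support, w ∈ S → w = u ∨ w = v) : isVisible G S u v :=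
  ⟨p, p.isPath_of_length_eq_dist hp, hp, hS⟩

theorem isDualMVSet_of_isTotalMVSet (h : isTotalMVSet G S) : isDualMVSet G S :=
  ⟨fun u _ v _ => h u v, fun u _ v _ => h u v⟩

theorem isTotalMVSet_of_forall_exists_twin (hG : G.Preconnected)
    (h : ∀ x ∈ S, ∃ y ∉ S, G.neighborSet y = G.neighborSet x) : isTotalMVSet G S := by
  classical
  choose! f hfS hf using h
  intro u v
  -- `g` fixes `u`, `v` and the vertices outside `S`, and moves the others to twins outside `S`
  let g x := if x = u ∨ x = v ∨ x ∉ S then x else f x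
  have hg : ∀ x y, G.Adj (g x) y ↔ G.Adj x y := by
    intro x y
    dsimp only [g]
    split_ifs with hx
    · rfl
    · exact Set.ext_iff.mp (hf x (by tauto)) y
  let φ : G →g G := ⟨g, fun {x y} h => (hg x _).2 ((hg y x).2 h.symm).symm⟩
  obtain ⟨p, hp⟩ := (hG u v).exists_walk_length_eq_dist
  refine isVisible_of_walk ((p.map φ).copy (if_pos (Or.inl rfl)) (if_pos (Or.inr (Or.inl rfl))))
    (by simpa using hp) fun w hw hwS => ?_
  simp only [Walk.support_copy, Walk.support_map, List.mem_map] at hw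
  obtain ⟨x, -, rfl⟩ := hw
  change g x ∈ S at hwS
  change g x = u ∨ g x = v
  by_cases hx : x = u ∨ x = v ∨ x ∉ S
  · rw [show g x = x from if_pos hx] at hwS ⊢
    tauto
  · rw [show g x = f x from if_neg hx] at hwS
    exact absurd hwS (hfS x (by tauto))

theorem not_isVisible_of_forall_adj_adj_mem {w : V} (huv : u ≠ v) (hadj : ¬G.Adj u v)
    (huw : G.Adj u w) (hwv : G.Adj w v) (hS : ∀ z, G.Adj u z → G.Adj z v → z ∈ S) :
    ¬isVisible G S u v := by
  rintro ⟨p, -, hlen, hp⟩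
  have hreach : G.Reachable u v := huw.reachable.trans hwv.reachable
  have hlen2 : p.length = 2 := by
    have := edist_eq_two_iff.mpr ⟨huv, hadj, ⟨w, huw, hwv.symm⟩⟩
    rw [← hreach.coe_dist_eq_edist] at this
    exact hlen.trans (by exact_mod_cast this)
  have h₁ : G.Adj u (p.getVert 1) := by simpa using p.adj_getVert_succ (i := 0) (by omega)
  have h₂ : G.Adj (p.getVert 1) v := by
    simpa [← hlen2] using p.adj_getVert_succ (i := 1) (by omega)
  rcases hp _ (p.getVert_mem_support 1) (hS _ h₁ h₂) with h | h
  · exact h₁.ne h.symm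
  · exact h₂.ne h

theorem not_isVisible_of_forall_adj_adj_adj_mem {a b : V} (hadj : ¬G.Adj u v)
    (hcn : ∀ z, G.Adj u z → ¬G.Adj z v) (h₁ : G.Adj u a) (h₂ : G.Adj a b) (h₃ : G.Adj b v)
    (hS : ∀ a b, G.Adj u a → G.Adj a b → G.Adj b v → a ∈ S ∨ b ∈ S) :
    ¬isVisible G S u v := by
  rintro ⟨p, -, hlen, hp⟩
  have huv : u ≠ v := by
    rintro rfl
    exact hcn a h₁ h₁.symm
  have hreach : G.Reachable u v := (h₁.reachable.trans h₂.reachable).trans h₃.reachable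
  have hlen3 : p.length = 3 := by
    have h2 := two_lt_edist_iff.mpr ⟨huv, hadj, Set.eq_empty_of_forall_notMem
      fun z hz => hcn z hz.1 (G.adj_symm hz.2)⟩
    have h3 := (Walk.cons h₁ (Walk.cons h₂ (Walk.cons h₃ Walk.nil))).edist_le
    rw [← hreach.coe_dist_eq_edist] at h2 h3
    have h2' : 2 < G.dist u v := by exact_mod_cast h2
    have h3' : G.dist u v ≤ 3 := by exact_mod_cast h3
    omega
  have e₁ : G.Adj u (p.getVert 1) := by simpa using p.adj_getVert_succ (i := 0) (by omega)
  have e₂ : G.Adj (p.getVert 1) (p.getVert 2) := p.adj_getVert_succ (i := 1) (by omega)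
  have e₃ : G.Adj (p.getVert 2) v := by
    simpa [← hlen3] using p.adj_getVert_succ (i := 2) (by omega)
  rcases hS _ _ e₁ e₂ e₃ with h | h
  · rcases hp _ (p.getVert_mem_support 1) h with h' | h'
    · exact e₁.ne h'.symm
    · exact hadj (h' ▸ e₁)
  · rcases hp _ (p.getVert_mem_support 2) h with h' | h'
    · exact hadj (h' ▸ e₃)
    · exact e₃.ne h'

end Visibility

section Words

variable {α : Type*} {l m s : List α}

def WordAdj (l m : List α) : Prop := ∃ c, m = l ++ [c] ∨ l = m ++ [c]

theorem WordAdj.symm (h : WordAdj l m) : WordAdj m l :=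
  let ⟨c, hc⟩ := h; ⟨c, hc.symm⟩

theorem WordAdj.length (h : WordAdj l m) :
    m.length = l.length + 1 ∨ l.length = m.length + 1 := by
  obtain ⟨c, rfl | rfl⟩ := h <;> simp

theorem exists_eq_append_singleton_iff : (∃ c, l = m ++ [c]) ↔ l ≠ [] ∧ m = l.dropLast := by
  constructor
  · rintro ⟨c, rfl⟩
    simp
  · rintro ⟨hne, rfl⟩
    exact ⟨l.getLast hne, (List.dropLast_append_getLast hne).symm⟩

theorem eq_of_wordAdj_append_singleton_of_length_le {c : α} (h : WordAdj m (l ++ [c]))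
    (hm : m.length ≤ l.length) : m = l := by
  obtain ⟨d, h | rfl⟩ := h
  · exact ((List.append_singleton_inj.mp h).1).symm
  · simp at hm

theorem eq_of_wordAdj_append_singleton {a b : α} (hab : a ≠ b) (ha : WordAdj (s ++ [a]) m)
    (hb : WordAdj m (s ++ [b])) : m = s := by
  obtain ⟨c, rfl | h⟩ := ha
  · obtain ⟨d, h | h⟩ := hb
    · simpa using congrArg List.length h
    · simp at h
      exact absurd h.1 hab
  · exact ((List.append_singleton_inj.mp h).1).symm

theorem eq_of_wordAdj_three {m₁ m₂ : List α} {a b c : α} (hab : a ≠ b)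
    (h₁ : WordAdj (s ++ [a, c]) m₁) (h₂ : WordAdj m₁ m₂) (h₃ : WordAdj m₂ (s ++ [b])) :
    m₂ = s := by
  obtain ⟨y, h₃ | rfl⟩ := h₃
  · exact ((List.append_singleton_inj.mp h₃).1).symm
  exfalso
  obtain ⟨x, rfl | h₁⟩ := h₁
  · obtain ⟨z, h₂ | h₂⟩ := h₂
    · simpa using congrArg List.length h₂
    · simp at h₂
      exact hab h₂.1
  · obtain rfl : m₁ = s ++ [a] := by
      have : s ++ [a] ++ [c] = m₁ ++ [x] := by simpa using h₁
      exact ((List.append_singleton_inj.mp this).1).symm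
    obtain ⟨z, h₂ | h₂⟩ := h₂
    · simp at h₂
      exact hab h₂.1.symm
    · simpa using congrArg List.length h₂

end Words

namespace GluedTree

section General

variable {r n t : ℕ} {x y : gluedVert r n t}

def word : gluedVert r n t → List (Fin t)
  | .inl (_, s) => s.1
  | .inr l => l.1

@[simp] theorem word_inl (i : Fin n) (s : {l : List (Fin t) // l.length < r}) :
    word (.inl (i, s) : gluedVert r n t) = s.1 := rfl

@[simp] theorem word_inr (l : {l : List (Fin t) // l.length = r}) :
    word (.inr l : gluedVert r n t) = l.1 := rfl

theorem length_word_le : ∀ x : gluedVert r n t, (word x).length ≤ r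
  | .inl (_, s) => s.2.le
  | .inr l => l.2.le

theorem ne_of_length_word_ne (h : (word x).length ≠ (word y).length) : x ≠ y :=
  fun e => h (e ▸ rfl)

@[simp] theorem inl_notMem_quasiLeaves (i : Fin n) (s : {l : List (Fin t) // l.length < r}) :
    (.inl (i, s) : gluedVert r n t) ∉ quasiLeaves r n t := by
  rintro ⟨l, h⟩
  cases h

@[simp] theorem inr_mem_quasiLeaves (l : {l : List (Fin t) // l.length = r}) :
    (.inr l : gluedVert r n t) ∈ quasiLeaves r n t :=
  ⟨l, rfl⟩

theorem mem_quasiLeaves_iff : x ∈ quasiLeaves r n t ↔ (word x).length = r := by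
  rcases x with ⟨i, s⟩ | l
  · simp [s.2.ne]
  · simp [l.2]

theorem word_injOn_quasiLeaves : Set.InjOn word (quasiLeaves r n t) := by
  rintro _ ⟨l, rfl⟩ _ ⟨l', rfl⟩ h
  rw [Subtype.ext h]

@[simp] theorem inl_mem_copySet {i j : Fin n} {s : {l : List (Fin t) // l.length < r}} :
    (.inl (j, s) : gluedVert r n t) ∈ copySet r n t i ↔ j = i := by
  constructor
  · rintro (⟨s', h⟩ | h)
    · cases h
      rfl
    · simp at h
  · rintro rfl
    exact Or.inl ⟨s, rfl⟩

theorem mem_copySet_of_mem_quasiLeaves (hx : x ∈ quasiLeaves r n t) (i : Fin n) :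
    x ∈ copySet r n t i :=
  Or.inr hx

@[simp] theorem inr_mem_copySet (i : Fin n) (l : {l : List (Fin t) // l.length = r}) :
    (.inr l : gluedVert r n t) ∈ copySet r n t i :=
  mem_copySet_of_mem_quasiLeaves (inr_mem_quasiLeaves l) i

theorem exists_mem_copySet [NeZero n] (x : gluedVert r n t) : ∃ i, x ∈ copySet r n t i := by
  rcases x with ⟨i, s⟩ | l
  · exact ⟨i, by simp⟩
  · exact ⟨0, by simp⟩

theorem eq_of_mem_copySet {i j : Fin n} (hx : x ∉ quasiLeaves r n t)
    (hi : x ∈ copySet r n t i) (hj : x ∈ copySet r n t j) : i = j := by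
  rcases x with ⟨k, s⟩ | l
  · simp only [inl_mem_copySet] at hi hj
    exact hi.symm.trans hj
  · simp at hx

theorem eq_of_word_eq {i : Fin n} (h : word x = word y) (hx : x ∈ copySet r n t i)
    (hy : y ∈ copySet r n t i) : x = y := by
  rcases x with ⟨j, s⟩ | l <;> rcases y with ⟨k, s'⟩ | l'
  · simp_all [Subtype.ext_iff]
  · have := s.2; have := l'.2; simp_all
  · have := l.2; have := s'.2; simp_all
  · simp_all [Subtype.ext_iff]

theorem exists_word_eq (i : Fin n) {l : List (Fin t)} (hl : l.length ≤ r) :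
    ∃ x : gluedVert r n t, x ∈ copySet r n t i ∧ word x = l := by
  rcases hl.lt_or_eq with hl | hl
  · exact ⟨.inl (i, ⟨l, hl⟩), by simp, rfl⟩
  · exact ⟨.inr ⟨l, hl⟩, by simp, rfl⟩

theorem gluedAdj_iff :
    gluedAdj r n t x y ↔
      (∃ i, x ∈ copySet r n t i ∧ y ∈ copySet r n t i) ∧ ∃ c, word y = word x ++ [c] := by
  rcases x with ⟨i, s⟩ | l <;> rcases y with ⟨j, s'⟩ | l'
  · simp [gluedAdj, eq_comm]
  · simp [gluedAdj]
  · have := s'.2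
    have := l.2
    simp only [gluedAdj, false_iff, not_and, not_exists]
    intro _ c h
    have := congrArg List.length h
    simp at this
    omega
  · have := l.2
    have := l'.2
    simp only [gluedAdj, false_iff, not_and, not_exists]
    intro _ c h
    simp_all

theorem adj_iff :
    (gluedTree r n t).Adj x y ↔
      (∃ i, x ∈ copySet r n t i ∧ y ∈ copySet r n t i) ∧ WordAdj (word x) (word y) := by
  rw [gluedTree, fromRel_adj, gluedAdj_iff, gluedAdj_iff]
  constructor
  · rintro ⟨-, ⟨hxy, c, hc⟩ | ⟨⟨i, hy, hx⟩, c, hc⟩⟩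
    · exact ⟨hxy, c, Or.inl hc⟩
    · exact ⟨⟨i, hx, hy⟩, c, Or.inr hc⟩
  · rintro ⟨⟨i, hx, hy⟩, c, hc | hc⟩
    · exact ⟨by rintro rfl; simp at hc, Or.inl ⟨⟨i, hx, hy⟩, c, hc⟩⟩
    · exact ⟨by rintro rfl; simp at hc, Or.inr ⟨⟨i, hy, hx⟩, c, hc⟩⟩

theorem wordAdj_of_adj (h : (gluedTree r n t).Adj x y) : WordAdj (word x) (word y) :=
  (adj_iff.mp h).2

theorem length_word_of_adj (h : (gluedTree r n t).Adj x y) :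
    (word y).length = (word x).length + 1 ∨ (word x).length = (word y).length + 1 :=
  (wordAdj_of_adj h).length

theorem mem_copySet_of_adj {i : Fin n} (h : (gluedTree r n t).Adj x y)
    (hx : x ∈ copySet r n t i) (hxl : x ∉ quasiLeaves r n t) : y ∈ copySet r n t i := by
  obtain ⟨⟨j, hxj, hyj⟩, -⟩ := adj_iff.mp h
  rwa [eq_of_mem_copySet hxl hx hxj]

theorem adj_of_word_eq_append {i : Fin n} {c : Fin t} (hx : x ∈ copySet r n t i)
    (hy : y ∈ copySet r n t i) (h : word y = word x ++ [c]) : (gluedTree r n t).Adj x y :=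
  adj_iff.mpr ⟨⟨i, hx, hy⟩, c, Or.inl h⟩

theorem exists_adj_word_eq_dropLast {i : Fin n} (hx : x ∈ copySet r n t i) (hne : word x ≠ []) :
    ∃ p ∈ copySet r n t i, word p = (word x).dropLast ∧ (gluedTree r n t).Adj p x := by
  obtain ⟨p, hp, hpw⟩ := exists_word_eq (r := r) i (l := (word x).dropLast)
    (by simpa using (length_word_le x).trans' (Nat.sub_le _ 1))
  exact ⟨p, hp, hpw, adj_of_word_eq_append hp hx (by rw [hpw, List.dropLast_append_getLast hne])⟩

theorem adj_iff_of_mem_quasiLeaves [NeZero n] (hx : x ∈ quasiLeaves r n t) :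
    (gluedTree r n t).Adj x y ↔ ∃ c, word x = word y ++ [c] := by
  obtain ⟨i, hy⟩ := exists_mem_copySet y
  constructor
  · intro h
    obtain ⟨c, hc | hc⟩ := wordAdj_of_adj h
    · have := length_word_le y
      rw [hc, List.length_append, mem_quasiLeaves_iff.mp hx] at this
      simp at this
    · exact ⟨c, hc⟩
  · rintro ⟨c, hc⟩
    exact (adj_of_word_eq_append hy (mem_copySet_of_mem_quasiLeaves hx i) hc).symm

theorem adj_of_dropLast_word_eq [NeZero n] (hx : x ∈ quasiLeaves r n t)
    (hy : y ∉ quasiLeaves r n t) (h : (word x).dropLast = word y) : (gluedTree r n t).Adj x y := by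
  refine (adj_iff_of_mem_quasiLeaves hx).mpr (exists_eq_append_singleton_iff.mpr ⟨?_, h.symm⟩)
  have := mem_quasiLeaves_iff.mp hx
  have := mem_quasiLeaves_iff.not.mp hy
  have := length_word_le y
  exact List.ne_nil_of_length_pos (by omega)

theorem take_word_of_mem_quasiLeaves (hx : x ∈ quasiLeaves r n t) :
    (word x).take (r - 1) = (word x).dropLast := by
  rw [List.dropLast_eq_take, mem_quasiLeaves_iff.mp hx]

theorem take_word_of_notMem_quasiLeaves (hx : x ∉ quasiLeaves r n t) :
    (word x).take (r - 1) = word x := by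
  have := mem_quasiLeaves_iff.not.mp hx
  have := length_word_le x
  exact List.take_of_length_le (by omega)

theorem reachable_of_mem_copySet {i : Fin n} (hx : x ∈ copySet r n t i)
    (hy : y ∈ copySet r n t i) : (gluedTree r n t).Reachable x y := by
  obtain ⟨ρ, hρ, hρw⟩ := exists_word_eq (r := r) (t := t) i (l := []) (Nat.zero_le r)
  suffices h : ∀ k, ∀ x ∈ copySet r n t i, (word x).length = k →
      (gluedTree r n t).Reachable x ρ from
    (h _ x hx rfl).trans (h _ y hy rfl).symm
  intro k
  induction k with
  | zero =>
    intro x hx hk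
    rw [eq_of_word_eq (by simp_all) hx hρ]
  | succ k ih =>
    intro x hx hk
    obtain ⟨p, hp, hpw, hpx⟩ := exists_adj_word_eq_dropLast hx (List.ne_nil_of_length_eq_add_one hk)
    exact hpx.symm.reachable.trans (ih p hp (by simp [hpw, hk]))

theorem preconnected_gluedTree [NeZero n] [NeZero t] : (gluedTree r n t).Preconnected := by
  obtain ⟨ℓ, -, hℓ⟩ := exists_word_eq (r := r) (n := n) 0 (l := List.replicate r (0 : Fin t))
    (by simp)
  have hleaf : ℓ ∈ quasiLeaves r n t := mem_quasiLeaves_iff.mpr (by simp [hℓ])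
  intro x y
  obtain ⟨i, hx⟩ := exists_mem_copySet x
  obtain ⟨j, hy⟩ := exists_mem_copySet y
  exact (reachable_of_mem_copySet hx (mem_copySet_of_mem_quasiLeaves hleaf i)).trans
    (reachable_of_mem_copySet (mem_copySet_of_mem_quasiLeaves hleaf j) hy)

theorem neighborSet_eq_of_dropLast_eq [NeZero n] (hx : x ∈ quasiLeaves r n t)
    (hy : y ∈ quasiLeaves r n t) (h : (word x).dropLast = (word y).dropLast) :
    (gluedTree r n t).neighborSet x = (gluedTree r n t).neighborSet y := by
  have hlen : (word x).length = (word y).length := by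
    rw [mem_quasiLeaves_iff.mp hx, mem_quasiLeaves_iff.mp hy]
  ext z
  simp only [mem_neighborSet, adj_iff_of_mem_quasiLeaves hx, adj_iff_of_mem_quasiLeaves hy,
    exists_eq_append_singleton_iff, ne_eq, ← List.length_eq_zero_iff, hlen, h]

def zeroEndLeaves (r n : ℕ) : Set (gluedVert r n 2) :=
  {x | x ∈ quasiLeaves r n 2 ∧ (word x).getLast? = some 0}

theorem isTotalMVSet_zeroEndLeaves [NeZero n] :
    isTotalMVSet (gluedTree r n 2) (zeroEndLeaves r n) := by
  refine isTotalMVSet_of_forall_exists_twin preconnected_gluedTree ?_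
  rintro x ⟨hx, hlast⟩
  obtain ⟨s, hs⟩ := List.getLast?_eq_some_iff.mp hlast
  have hlen : (s ++ [1]).length = r := by
    rw [← mem_quasiLeaves_iff.mp hx, hs]
    simp
  exact ⟨.inr ⟨s ++ [1], hlen⟩, fun h => by simp [zeroEndLeaves] at h,
    neighborSet_eq_of_dropLast_eq (by simp) hx (by simp [hs])⟩

theorem ncard_zeroEndLeaves (hr : 1 ≤ r) : (zeroEndLeaves r n).ncard = 2 ^ (r - 1) := by
  rw [show 2 ^ (r - 1) = Fintype.card (Fin 2) ^ (r - 1) by simp, ← List.ncard_length_eq]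
  refine Set.ncard_congr (fun x _ => (word x).dropLast) ?_ ?_ ?_
  · rintro x ⟨hx, -⟩
    simp [mem_quasiLeaves_iff.mp hx]
  · rintro x y ⟨hx, hx0⟩ ⟨hy, hy0⟩ h
    obtain ⟨s, hs⟩ := List.getLast?_eq_some_iff.mp hx0
    obtain ⟨s', hs'⟩ := List.getLast?_eq_some_iff.mp hy0
    simp only [hs, hs', List.dropLast_concat] at h
    exact word_injOn_quasiLeaves hx hy (by rw [hs, hs', h])
  · intro l hl
    have hlen : (l ++ [0]).length = r := by
      simp at hl ⊢
      omega
    exact ⟨.inr ⟨l ++ [0], hlen⟩, ⟨by simp, by simp⟩, by simp⟩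

end General

section Binary

variable {r : ℕ} {x y z : gluedVert r 2 2} {S : Set (gluedVert r 2 2)}

theorem eq_or_eq_of_word_eq {i j k : Fin 2} (hij : i ≠ j) (hx : x ∈ copySet r 2 2 i)
    (hy : y ∈ copySet r 2 2 j) (hz : z ∈ copySet r 2 2 k) (hzx : word z = word x)
    (hzy : word z = word y) : z = x ∨ z = y := by
  rcases Fin.eq_or_eq_of_ne hij k with rfl | rfl
  · exact Or.inl (eq_of_word_eq hzx hz hx)
  · exact Or.inr (eq_of_word_eq hzy hz hy)

theorem eq_or_eq_of_mem_quasiLeaves {s : List (Fin 2)} {a b d : Fin 2} (hab : a ≠ b)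
    (hx : x ∈ quasiLeaves r 2 2) (hy : y ∈ quasiLeaves r 2 2) (hz : z ∈ quasiLeaves r 2 2)
    (hxw : word x = s ++ [a]) (hyw : word y = s ++ [b]) (hzw : word z = s ++ [d]) :
    z = x ∨ z = y := by
  rcases Fin.eq_or_eq_of_ne hab d with rfl | rfl
  · exact Or.inl (word_injOn_quasiLeaves hz hx (hzw.trans hxw.symm))
  · exact Or.inr (word_injOn_quasiLeaves hz hy (hzw.trans hyw.symm))

theorem false_of_mem_of_child_mem_of_sibling_notMem (hS : isDualMVSet (gluedTree r 2 2) S)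
    {w c c' : gluedVert r 2 2} {i a b : Fin 2} (hab : a ≠ b) (hw : w ∈ S) (hc : c ∈ S)
    (hc' : c' ∉ S) (hwi : w ∈ copySet r 2 2 i) (hci : c ∈ copySet r 2 2 i)
    (hc'i : c' ∈ copySet r 2 2 i)
    (hcw : word c = word w ++ [a]) (hc'w : word c' = word w ++ [b])
    (hlen : (word w).length + 2 ≤ r) : False := by
  have hwl : w ∉ quasiLeaves r 2 2 := by rw [mem_quasiLeaves_iff]; omega
  have hc'l : c' ∉ quasiLeaves r 2 2 := by rw [mem_quasiLeaves_iff, hc'w]; simp; omega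
  have hwc := adj_of_word_eq_append hwi hci hcw
  have hwc' := adj_of_word_eq_append hwi hc'i hc'w
  obtain ⟨g, hgi, hgw⟩ := exists_word_eq (r := r) i (l := word w ++ [a, 0]) (by simp; omega)
  have hcg : (gluedTree r 2 2).Adj c g :=
    adj_of_word_eq_append (c := 0) hci hgi (by simp [hgw, hcw])
  by_cases hg : g ∈ S
  · refine not_isVisible_of_forall_adj_adj_mem (ne_of_length_word_ne (by simp [hgw]))
      (fun h => by have := length_word_of_adj h; simp [hgw] at this; omega) hwc hcg
      (fun z h₁ h₂ => ?_) (hS.1 w hw g hg)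
    have hzw : word z = word w ++ [a] := by
      refine eq_of_wordAdj_append_singleton_of_length_le (c := 0)
        (by simpa [hgw] using wordAdj_of_adj h₂) ?_
      have := length_word_of_adj h₁
      simp only [List.length_append, List.length_singleton]
      omega
    rwa [eq_of_word_eq (hzw.trans hcw.symm) (mem_copySet_of_adj h₁ hwi hwl) hci]
  · refine not_isVisible_of_forall_adj_adj_adj_mem
      (fun h => by simpa [WordAdj, hgw, hc'w, hab] using wordAdj_of_adj h) (fun z h₁ h₂ => ?_)
      hcg.symm hwc.symm hwc' (fun z₁ z₂ h₁ h₂ h₃ => Or.inr ?_) (hS.2 g hg c' hc')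
    · have := length_word_of_adj h₁
      have := length_word_of_adj h₂
      simp [hgw, hc'w] at *
      omega
    · have hzw : word z₂ = word w := eq_of_wordAdj_three hab
        (by simpa [hgw] using wordAdj_of_adj h₁) (wordAdj_of_adj h₂)
        (by simpa [hc'w] using wordAdj_of_adj h₃)
      rwa [eq_of_word_eq hzw (mem_copySet_of_adj h₃.symm hc'i hc'l) hwi]

theorem le_length_word_add_one (hS : isDualMVSet (gluedTree r 2 2) S) {w : gluedVert r 2 2}
    (hw : w ∈ S) : r ≤ (word w).length + 1 := by
  by_contra! hlen
  obtain ⟨i, hwi⟩ := exists_mem_copySet w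
  choose c hci hcw using fun a : Fin 2 =>
    exists_word_eq (r := r) i (l := word w ++ [a]) (by simp; omega)
  have hcl : c 0 ∉ quasiLeaves r 2 2 := by rw [mem_quasiLeaves_iff, hcw]; simp; omega
  have hwc : ∀ a, (gluedTree r 2 2).Adj w (c a) := fun a =>
    adj_of_word_eq_append hwi (hci a) (hcw a)
  have siblings : ¬isVisible (gluedTree r 2 2) S (c 0) (c 1) := by
    refine not_isVisible_of_forall_adj_adj_mem (fun h => by simpa [hcw] using congrArg word h)
      (fun h => by simpa [hcw] using length_word_of_adj h) (hwc 0).symm (hwc 1) fun z h₀ h₁ => ?_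
    have hzw : word z = word w := eq_of_wordAdj_append_singleton (a := 0) (b := 1) (by decide)
      (by simpa [hcw] using wordAdj_of_adj h₀) (by simpa [hcw] using wordAdj_of_adj h₁)
    rwa [eq_of_word_eq hzw (mem_copySet_of_adj h₀ (hci 0) hcl) hwi]
  by_cases h₀ : c 0 ∈ S <;> by_cases h₁ : c 1 ∈ S
  · exact siblings (hS.1 _ h₀ _ h₁)
  · exact false_of_mem_of_child_mem_of_sibling_notMem hS (by decide) hw h₀ h₁ hwi (hci 0) (hci 1)
      (hcw 0) (hcw 1) (by omega)
  · exact false_of_mem_of_child_mem_of_sibling_notMem hS (by decide) hw h₁ h₀ hwi (hci 1) (hci 0)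
      (hcw 1) (hcw 0) (by omega)
  · exact siblings (hS.2 _ h₀ _ h₁)

theorem exists_parent_notMem (hS : isDualMVSet (gluedTree r 2 2) S) (hr : 2 ≤ r) {j : Fin 2}
    {w : gluedVert r 2 2} (hwj : w ∈ copySet r 2 2 j) (hwr : (word w).length + 1 = r) :
    ∃ p ∈ copySet r 2 2 j, p ∉ quasiLeaves r 2 2 ∧ p ∉ S ∧ (word p).length + 2 = r ∧
      (gluedTree r 2 2).Adj p w := by
  obtain ⟨p, hpj, hpw, hpwadj⟩ :=
    exists_adj_word_eq_dropLast hwj (List.ne_nil_of_length_pos (by omega))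
  have hplen : (word p).length + 2 = r := by simp [hpw]; omega
  refine ⟨p, hpj, by rw [mem_quasiLeaves_iff]; omega, fun h => ?_, hplen, hpwadj⟩
  have := le_length_word_add_one hS h
  omega

theorem mem_of_adj_of_mem_quasiLeaves (hS : isDualMVSet (gluedTree r 2 2) S) (hr : 2 ≤ r)
    {w ℓ : gluedVert r 2 2} (hw : w ∈ S) (hℓl : ℓ ∈ quasiLeaves r 2 2)
    (hwℓ : (gluedTree r 2 2).Adj w ℓ) : ℓ ∈ S := by
  by_contra hℓS
  obtain ⟨b, hℓw⟩ := (adj_iff_of_mem_quasiLeaves hℓl).mp hwℓ.symm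
  have hwr : (word w).length + 1 = r := by simpa [hℓw] using mem_quasiLeaves_iff.mp hℓl
  obtain ⟨j, hwj⟩ := exists_mem_copySet w
  obtain ⟨p, hpj, hpl, hpS, hplen, hpw⟩ := exists_parent_notMem hS hr hwj hwr
  refine not_isVisible_of_forall_adj_adj_mem (ne_of_length_word_ne (by simp [hℓw]; omega))
    (fun h => by have := length_word_of_adj h; simp [hℓw] at this; omega) hpw hwℓ
    (fun z h₁ h₂ => ?_) (hS.2 p hpS ℓ hℓS)
  have hzw : word z = word w := by
    refine eq_of_wordAdj_append_singleton_of_length_le (by simpa [hℓw] using wordAdj_of_adj h₂) ?_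
    have := length_word_of_adj h₁
    omega
  rwa [eq_of_word_eq hzw (mem_copySet_of_adj h₁ hpj hpl) hwj]

theorem mem_of_word_eq_of_mem (hS : isDualMVSet (gluedTree r 2 2) S) (hr : 2 ≤ r)
    {w w' : gluedVert r 2 2} (hw : w ∈ S) (hwr : (word w).length + 1 = r)
    (hw'l : w' ∉ quasiLeaves r 2 2) (hw'w : word w' = word w) : w' ∈ S := by
  by_contra hw'S
  obtain ⟨j, hwj⟩ := exists_mem_copySet w
  obtain ⟨j', hw'j⟩ := exists_mem_copySet w'
  have hj' : j' ≠ j := fun h => hw'S (eq_of_word_eq hw'w hw'j (h ▸ hwj) ▸ hw)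
  obtain ⟨p, hpj, hpl, hpS, hplen, hpw⟩ := exists_parent_notMem hS hr hwj hwr
  choose ℓ hℓj hℓw using fun a : Fin 2 =>
    exists_word_eq (r := r) j (l := word w ++ [a]) (by simp; omega)
  have hℓl : ∀ a, ℓ a ∈ quasiLeaves r 2 2 := fun a => mem_quasiLeaves_iff.mpr (by simp [hℓw]; omega)
  have hwℓ : ∀ a, (gluedTree r 2 2).Adj w (ℓ a) := fun a =>
    adj_of_word_eq_append hwj (hℓj a) (hℓw a)
  refine not_isVisible_of_forall_adj_adj_adj_mem
    (fun h => hj' (eq_of_mem_copySet hw'l hw'j (mem_copySet_of_adj h hpj hpl)))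
    (fun z h₁ h₂ => ?_) hpw (hwℓ 0)
    ((adj_iff_of_mem_quasiLeaves (hℓl 0)).mpr ⟨0, by rw [hℓw, hw'w]⟩)
    (fun z₁ z₂ h₁ h₂ h₃ => Or.inr ?_) (hS.2 p hpS w' hw'S)
  · have := length_word_of_adj h₁
    have := length_word_of_adj h₂
    rw [hw'w] at this
    omega
  · -- `z₁` lies in the tree of `p` and `z₂` in that of `w'`, so one of them is a quasi-leaf
    have hz₂l : z₂ ∈ quasiLeaves r 2 2 := by
      by_contra hz₂l
      have hz₁l : z₁ ∈ quasiLeaves r 2 2 := by_contra fun hz₁l =>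
        hj' (eq_of_mem_copySet hz₂l (mem_copySet_of_adj h₃.symm hw'j hw'l)
          (mem_copySet_of_adj h₂ (mem_copySet_of_adj h₁ hpj hpl) hz₁l))
      have := length_word_of_adj h₁
      rw [mem_quasiLeaves_iff.mp hz₁l] at this
      omega
    obtain ⟨d, hd⟩ := (adj_iff_of_mem_quasiLeaves hz₂l).mp h₃
    rcases eq_or_eq_of_mem_quasiLeaves (by decide) (hℓl 0) (hℓl 1) hz₂l (hℓw 0) (hℓw 1)
      (hd.trans (by rw [hw'w])) with rfl | rfl
    · exact mem_of_adj_of_mem_quasiLeaves hS hr hw (hℓl 0) (hwℓ 0)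
    · exact mem_of_adj_of_mem_quasiLeaves hS hr hw (hℓl 1) (hwℓ 1)

theorem false_of_mem_of_adj_mem_quasiLeaves (hS : isDualMVSet (gluedTree r 2 2) S) (hr : 2 ≤ r)
    {w ℓ : gluedVert r 2 2} (hw : w ∈ S) (hℓ : ℓ ∈ S) (hℓl : ℓ ∈ quasiLeaves r 2 2)
    (hwℓ : (gluedTree r 2 2).Adj w ℓ) : False := by
  obtain ⟨b, hℓw⟩ := (adj_iff_of_mem_quasiLeaves hℓl).mp hwℓ.symm
  have hwr : (word w).length + 1 = r := by simpa [hℓw] using mem_quasiLeaves_iff.mp hℓl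
  have hwl : w ∉ quasiLeaves r 2 2 := by rw [mem_quasiLeaves_iff]; omega
  obtain ⟨j, hwj⟩ := exists_mem_copySet w
  obtain ⟨j', hj'⟩ := exists_ne j
  obtain ⟨w', hw'j, hw'w⟩ := exists_word_eq (r := r) j' (l := word w) (by omega)
  have hw'l : w' ∉ quasiLeaves r 2 2 := by rw [mem_quasiLeaves_iff, hw'w]; omega
  obtain ⟨b', hb'⟩ := exists_ne b
  obtain ⟨ℓ', hℓ'j, hℓ'w⟩ := exists_word_eq (r := r) j (l := word w ++ [b']) (by simp; omega)
  have hℓ'l : ℓ' ∈ quasiLeaves r 2 2 := mem_quasiLeaves_iff.mpr (by simp [hℓ'w]; omega)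
  have hwℓ' : (gluedTree r 2 2).Adj w ℓ' := adj_of_word_eq_append hwj hℓ'j hℓ'w
  refine not_isVisible_of_forall_adj_adj_mem
    (fun h => hb' (by simpa [hℓw, hℓ'w] using (congrArg word h).symm))
    (fun h => by simpa [hℓw, hℓ'w] using length_word_of_adj h) hwℓ.symm hwℓ' (fun z h₁ h₂ => ?_)
    (hS.1 ℓ hℓ ℓ' (mem_of_adj_of_mem_quasiLeaves hS hr hw hℓ'l hwℓ'))
  have hzw : word z = word w := eq_of_wordAdj_append_singleton hb'.symm
    (by simpa [hℓw] using wordAdj_of_adj h₁) (by simpa [hℓ'w] using wordAdj_of_adj h₂)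
  obtain ⟨k, hzk⟩ := exists_mem_copySet z
  rcases eq_or_eq_of_word_eq hj'.symm hwj hw'j hzk hzw (hzw.trans hw'w.symm) with rfl | rfl
  · exact hw
  · exact mem_of_word_eq_of_mem hS hr hw hwr hw'l hw'w

theorem not_adj_of_mem (hS : isDualMVSet (gluedTree r 2 2) S) (hr : 2 ≤ r) (hx : x ∈ S)
    (hy : y ∈ S) : ¬(gluedTree r 2 2).Adj x y := by
  intro h
  have := le_length_word_add_one hS hx
  have := le_length_word_add_one hS hy
  have := length_word_le x
  have := length_word_le y
  rcases length_word_of_adj h with hl | hl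
  · exact false_of_mem_of_adj_mem_quasiLeaves hS hr hx hy
      (mem_quasiLeaves_iff.mpr (by omega)) h
  · exact false_of_mem_of_adj_mem_quasiLeaves hS hr hy hx
      (mem_quasiLeaves_iff.mpr (by omega)) h.symm
theorem eq_of_mem_of_word_eq (hS : isDualMVSet (gluedTree r 2 2) S) (hr : 2 ≤ r) (hx : x ∈ S)
    (hy : y ∈ S) (hxl : x ∉ quasiLeaves r 2 2) (h : word x = word y) : x = y := by
  obtain ⟨i, hxi⟩ := exists_mem_copySet x
  obtain ⟨j, hyj⟩ := exists_mem_copySet y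
  by_contra hxy
  have hij : i ≠ j := fun hij => hxy (eq_of_word_eq h hxi (hij ▸ hyj))
  have hxr : (word x).length + 1 = r := by
    have := le_length_word_add_one hS hx
    have := mem_quasiLeaves_iff.not.mp hxl
    have := length_word_le x
    omega
  choose ℓ hℓi hℓw using fun a : Fin 2 =>
    exists_word_eq (r := r) i (l := word x ++ [a]) (by simp; omega)
  have hxℓ : ∀ a, (gluedTree r 2 2).Adj x (ℓ a) := fun a =>
    adj_of_word_eq_append hxi (hℓi a) (hℓw a)
  refine not_isVisible_of_forall_adj_adj_mem (fun h => by simpa [hℓw] using congrArg word h)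
    (fun h => by simpa [hℓw] using length_word_of_adj h) (hxℓ 0).symm (hxℓ 1) (fun z h₀ h₁ => ?_)
    (hS.2 _ (fun h => not_adj_of_mem hS hr hx h (hxℓ 0)) _
      (fun h => not_adj_of_mem hS hr hx h (hxℓ 1)))
  have hzw : word z = word x := eq_of_wordAdj_append_singleton (a := 0) (b := 1) (by decide)
    (by simpa [hℓw] using wordAdj_of_adj h₀) (by simpa [hℓw] using wordAdj_of_adj h₁)
  obtain ⟨k, hzk⟩ := exists_mem_copySet z
  rcases eq_or_eq_of_word_eq hij hxi hyj hzk hzw (hzw.trans h) with rfl | rfl <;> assumption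

theorem eq_of_mem_of_dropLast_word_eq (hS : isDualMVSet (gluedTree r 2 2) S) (hr : 2 ≤ r)
    (hx : x ∈ S) (hy : y ∈ S) (hxl : x ∈ quasiLeaves r 2 2) (hyl : y ∈ quasiLeaves r 2 2)
    (h : (word x).dropLast = (word y).dropLast) : x = y := by
  have hxr := mem_quasiLeaves_iff.mp hxl
  have hyr := mem_quasiLeaves_iff.mp hyl
  obtain ⟨a, ha⟩ : ∃ a, word x = (word x).dropLast ++ [a] :=
    exists_eq_append_singleton_iff.mpr ⟨List.ne_nil_of_length_pos (by omega), rfl⟩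
  obtain ⟨b, hb⟩ : ∃ b, word y = (word x).dropLast ++ [b] :=
    exists_eq_append_singleton_iff.mpr ⟨List.ne_nil_of_length_pos (by omega), h⟩
  by_contra hxy
  have hab : a ≠ b := fun hab => hxy (word_injOn_quasiLeaves hxl hyl (by rw [ha, hb, hab]))
  choose v hvi hvw using fun i : Fin 2 =>
    exists_word_eq (r := r) i (l := (word x).dropLast) (by simp; omega)
  have hvl : ∀ i, v i ∉ quasiLeaves r 2 2 := fun i => by
    rw [mem_quasiLeaves_iff, hvw]; simp; omega
  have hvx : ∀ i, (gluedTree r 2 2).Adj (v i) x := fun i =>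
    (adj_of_dropLast_word_eq hxl (hvl i) (hvw i).symm).symm
  refine not_isVisible_of_forall_adj_adj_mem
    (fun h => absurd (eq_of_mem_copySet (hvl 0) (hvi 0) (h ▸ hvi 1)) (by decide))
    (fun h => by simpa [hvw] using length_word_of_adj h) (hvx 0) (hvx 1).symm (fun z h₀ h₁ => ?_)
    (hS.2 _ (fun h => not_adj_of_mem hS hr h hx (hvx 0)) _
      (fun h => not_adj_of_mem hS hr h hx (hvx 1)))
  have hzl : z ∈ quasiLeaves r 2 2 := by_contra fun hzl => absurd
    (eq_of_mem_copySet hzl (mem_copySet_of_adj h₀ (hvi 0) (hvl 0))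
      (mem_copySet_of_adj h₁.symm (hvi 1) (hvl 1))) (by decide)
  obtain ⟨d, hd⟩ := (adj_iff_of_mem_quasiLeaves hzl).mp h₀.symm
  rcases eq_or_eq_of_mem_quasiLeaves hab hxl hyl hzl ha hb (by rw [hd, hvw]) with rfl | rfl
    <;> assumption

theorem eq_of_mem_of_take_word_eq (hS : isDualMVSet (gluedTree r 2 2) S) (hr : 2 ≤ r)
    (hx : x ∈ S) (hy : y ∈ S) (h : (word x).take (r - 1) = (word y).take (r - 1)) : x = y := by
  by_cases hxl : x ∈ quasiLeaves r 2 2 <;> by_cases hyl : y ∈ quasiLeaves r 2 2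
  · rw [take_word_of_mem_quasiLeaves hxl, take_word_of_mem_quasiLeaves hyl] at h
    exact eq_of_mem_of_dropLast_word_eq hS hr hx hy hxl hyl h
  · rw [take_word_of_mem_quasiLeaves hxl, take_word_of_notMem_quasiLeaves hyl] at h
    exact absurd (adj_of_dropLast_word_eq hxl hyl h) (not_adj_of_mem hS hr hx hy)
  · rw [take_word_of_notMem_quasiLeaves hxl, take_word_of_mem_quasiLeaves hyl] at h
    exact absurd (adj_of_dropLast_word_eq hyl hxl h.symm) (not_adj_of_mem hS hr hy hx)
  · rw [take_word_of_notMem_quasiLeaves hxl, take_word_of_notMem_quasiLeaves hyl] at h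
    exact eq_of_mem_of_word_eq hS hr hx hy hxl h

theorem ncard_le_of_isDualMVSet (hS : isDualMVSet (gluedTree r 2 2) S) (hr : 2 ≤ r) :
    S.ncard ≤ 2 ^ (r - 1) := by
  calc S.ncard ≤ {l : List (Fin 2) | l.length = r - 1}.ncard :=
        Set.ncard_le_ncard_of_injOn (fun x => (word x).take (r - 1))
          (fun x hx => by have := le_length_word_add_one hS hx; simp; omega)
          (fun x hx y hy h => eq_of_mem_of_take_word_eq hS hr hx hy h) (List.finite_length_eq _ _)
    _ = 2 ^ (r - 1) := by simp [List.ncard_length_eq]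

end Binary

end GluedTree

theorem stmt8 (r : ℕ) (hr : 2 ≤ r) :
    IsGreatest {k : ℕ | ∃ S : Set (gluedVert r 2 2),
      isTotalMVSet (gluedTree r 2 2) S ∧ S.ncard = k} (2 ^ (r - 1)) ∧
    IsGreatest {k : ℕ | ∃ S : Set (gluedVert r 2 2),
      isDualMVSet (gluedTree r 2 2) S ∧ S.ncard = k} (2 ^ (r - 1)) := by
  have htotal := GluedTree.isTotalMVSet_zeroEndLeaves (r := r) (n := 2)
  have hcard := GluedTree.ncard_zeroEndLeaves (r := r) (n := 2) (by omega)
  refine ⟨⟨⟨_, htotal, hcard⟩, ?_⟩, ⟨⟨_, isDualMVSet_of_isTotalMVSet htotal, hcard⟩, ?_⟩⟩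
  · rintro k ⟨S, hS, rfl⟩
    exact GluedTree.ncard_le_of_isDualMVSet (isDualMVSet_of_isTotalMVSet hS) hr
  · rintro k ⟨S, hS, rfl⟩
    exact GluedTree.ncard_le_of_isDualMVSet hS hr
end

section
/- For r ≥ 2, the outer general position number of GT(r) equals 2^r, and the set of quasi-leaves is the unique maximum outer general position set. -/
/-!
Inside one copy, a vertex is the word `a` read from the root, and distances are tree distances
`|a| + |b| - 2 lcp(a, b)`: every edge appends or deletes one final letter, and the walk through
the common prefix attains this bound. Since `lcp` is an ultrametric, for quasi-leaves `l₁, l₃` and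
any vertex `b` the equality `d(l₁, l₃) + d(l₃, b) = d(l₁, b)` forces `l₃ ∈ {l₁, b}`, so the
quasi-leaves are in outer general position. Conversely, if an outer general position set `S`
contains an internal vertex `s` of copy `i`, then for every other vertex `u` of that copy there is
a quasi-leaf `v` below `s` whose word leaves the word of `u` no later than depth `|s|`; the geodesic
from `u` to `v` then passes through `s`, so `u ∉ S`. Hence `S` consists of quasi-leaves or has at
most one vertex in each of the two copies, and `2 < 2 ^ r`.
-/

open SimpleGraph

namespace List

variable {α : Type*} [DecidableEq α]

def lcp : List α → List α → ℕ
  | a :: as, b :: bs => if a = b then lcp as bs + 1 else 0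
  | _, _ => 0

def treeDist (a b : List α) : ℕ := (a.length - lcp a b) + (b.length - lcp a b)

theorem le_lcp_iff {k : ℕ} {a b : List α} : k ≤ lcp a b ↔ k ≤ a.length ∧ a.take k = b.take k := by
  induction a generalizing b k with
  | nil => cases k <;> simp [lcp]
  | cons x a ih =>
    cases b with
    | nil => cases k <;> simp [lcp]
    | cons y b =>
      cases k with
      | zero => simp
      | succ k =>
        by_cases hxy : x = y
        · simp [lcp, hxy, ih]
        · simp [lcp, hxy]

theorem lcp_le_length_left (a b : List α) : lcp a b ≤ a.length := (le_lcp_iff.1 le_rfl).1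

theorem take_lcp (a b : List α) : a.take (lcp a b) = b.take (lcp a b) := (le_lcp_iff.1 le_rfl).2

theorem lcp_comm (a b : List α) : lcp a b = lcp b a := by
  have key : ∀ {k} {a b : List α}, k ≤ lcp a b → k ≤ lcp b a := by
    intro k a b h
    obtain ⟨hk, htake⟩ := le_lcp_iff.1 h
    refine le_lcp_iff.2 ⟨?_, htake.symm⟩
    have := congrArg length htake
    simp only [length_take] at this
    omega
  exact le_antisymm (key le_rfl) (key le_rfl)

theorem lcp_le_length_right (a b : List α) : lcp a b ≤ b.length :=
  lcp_comm a b ▸ lcp_le_length_left b a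

@[simp]
theorem lcp_self (a : List α) : lcp a a = a.length :=
  le_antisymm (lcp_le_length_left a a) (le_lcp_iff.2 ⟨le_rfl, rfl⟩)

@[simp]
theorem treeDist_self (a : List α) : treeDist a a = 0 := by simp [treeDist]

theorem min_lcp_le_lcp (a b c : List α) : min (lcp a b) (lcp b c) ≤ lcp a c := by
  have hab := le_lcp_iff.1 (min_le_left (lcp a b) (lcp b c))
  have hbc := le_lcp_iff.1 (min_le_right (lcp a b) (lcp b c))
  exact le_lcp_iff.2 ⟨hab.1, hab.2.trans hbc.2⟩

theorem isPrefix_of_length_le_lcp {a b : List α} (h : a.length ≤ lcp a b) : a <+: b := by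
  rw [prefix_iff_eq_take, ← (le_lcp_iff.1 h).2, take_length]

theorem lcp_le_lcp_append_singleton (m a : List α) (x : α) : lcp m a ≤ lcp m (a ++ [x]) :=
  le_lcp_iff.2 ⟨lcp_le_length_left m a,
    by rw [take_append_of_le_length (lcp_le_length_right m a), take_lcp]⟩

theorem lcp_append_singleton_le (m a : List α) (x : α) : lcp m (a ++ [x]) ≤ lcp m a + 1 := by
  set k := lcp m (a ++ [x])
  have hk : k ≤ a.length + 1 := by simpa using lcp_le_length_right m (a ++ [x])
  suffices k - 1 ≤ lcp m a by omega
  refine le_lcp_iff.2 ⟨by have := lcp_le_length_left m (a ++ [x]); omega, ?_⟩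
  rw [(le_lcp_iff.1 (Nat.sub_le k 1)).2, take_append_of_le_length (by omega)]

theorem treeDist_append_singleton_le (m a : List α) (x : α) :
    treeDist m (a ++ [x]) ≤ treeDist m a + 1 ∧ treeDist m a ≤ treeDist m (a ++ [x]) + 1 := by
  have := lcp_le_lcp_append_singleton m a x
  have := lcp_append_singleton_le m a x
  have := lcp_le_length_left m a
  have := lcp_le_length_right m a
  simp only [treeDist, length_append, length_singleton]
  omega

theorem eq_or_eq_of_treeDist_add_le {n : ℕ} {a b c : List α} (ha : a.length = n)
    (hc : c.length = n) (hb : b.length ≤ n) (h : treeDist a c + treeDist c b ≤ treeDist a b) :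
    c = a ∨ c = b := by
  have := min_lcp_le_lcp a c b
  have := lcp_le_length_left a c
  have := lcp_le_length_right c b
  have := lcp_le_length_right a b
  simp only [treeDist] at h
  rcases (show n ≤ lcp a c ∨ n ≤ lcp c b by omega) with hac | hcb
  · exact .inl ((isPrefix_of_length_le_lcp (lcp_comm a c ▸ hc ▸ hac)).eq_of_length (by omega))
  · exact .inr ((isPrefix_of_length_le_lcp (hc ▸ hcb)).eq_of_length (by omega))

theorem exists_isPrefix_lcp_le [Nontrivial α] (l s : List α) {n : ℕ} (hs : s.length < n) :
    ∃ v : List α, v.length = n ∧ s <+: v ∧ lcp l v ≤ s.length := by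
  obtain ⟨x, hx⟩ : ∃ x, l[s.length]? ≠ some x := by
    cases l[s.length]? with
    | none => exact ⟨Classical.arbitrary α, by simp⟩
    | some y => simpa [eq_comm] using exists_ne y
  refine ⟨s ++ replicate (n - s.length) x, by simp; omega, prefix_append _ _, ?_⟩
  by_contra! h
  have htake := congrArg (·[s.length]?) (le_lcp_iff.1 h).2
  exact hx (by simpa [hs] using htake)

end List

theorem SimpleGraph.Walk.dist_add_dist_le_length {V : Type*} {G : SimpleGraph V} {u v w : V}
    (p : G.Walk u v) (hw : w ∈ p.support) : G.dist u w + G.dist w v ≤ p.length := by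
  classical
  rw [← p.take_spec hw, Walk.length_append]
  exact add_le_add (dist_le _) (dist_le _)

theorem isOuterGPSet_iff {V : Type*} {G : SimpleGraph V} {S : Set V} :
    isOuterGPSet G S ↔ ∀ u ∈ S, ∀ v, isPositionable G S u v := by
  refine ⟨fun hS u hu v => ?_, fun h => ⟨fun u hu v _ => h u hu v, fun u hu v _ => h u hu v⟩⟩
  by_cases hv : v ∈ S
  · exact hS.1 u hu v hv
  · exact hS.2 u hu v hv

namespace gluedTree

variable {r n t : ℕ}

open List

def label : gluedVert r n t → List (Fin t)
  | .inl (_, s) => s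
  | .inr l => l

def vertexAt (i : Fin n) (l : List (Fin t)) : gluedVert r n t :=
  if h : l.length < r then .inl (i, ⟨l, h⟩) else .inr ⟨l.take r, by simp; omega⟩

theorem length_label_le (x : gluedVert r n t) : (label x).length ≤ r := by
  rcases x with ⟨_, s, hs⟩ | ⟨l, hl⟩ <;> simp [label] <;> omega

theorem label_vertexAt (i : Fin n) {l : List (Fin t)} (hl : l.length ≤ r) :
    label (vertexAt (r := r) i l) = l := by
  unfold vertexAt
  split_ifs with h
  · rfl
  · simp [label, take_of_length_le hl]

theorem length_label_of_mem_quasiLeaves {x : gluedVert r n t} (hx : x ∈ quasiLeaves r n t) :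
    (label x).length = r := by
  obtain ⟨⟨l, hl⟩, rfl⟩ := hx
  exact hl

theorem quasiLeaves_subset_copySet (i : Fin n) : quasiLeaves r n t ⊆ copySet r n t i :=
  fun _ hx => .inr hx

theorem exists_mem_copySet [NeZero n] (x : gluedVert r n t) : ∃ i, x ∈ copySet r n t i := by
  rcases x with ⟨i, s⟩ | l
  · exact ⟨i, .inl ⟨s, rfl⟩⟩
  · exact ⟨0, .inr ⟨l, rfl⟩⟩

theorem vertexAt_label {i : Fin n} {x : gluedVert r n t} (hx : x ∈ copySet r n t i) :
    vertexAt i (label x) = x := by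
  rcases hx with ⟨⟨s, hs⟩, rfl⟩ | ⟨⟨l, hl⟩, rfl⟩
  · simp [vertexAt, label, hs]
  · simp [vertexAt, label, hl, take_of_length_le]

theorem eq_of_label_eq {i : Fin n} {x y : gluedVert r n t} (hx : x ∈ copySet r n t i)
    (hy : y ∈ copySet r n t i) (h : label x = label y) : x = y := by
  rw [← vertexAt_label hx, ← vertexAt_label hy, h]

theorem adj_vertexAt_append_singleton (i : Fin n) {l : List (Fin t)} (hl : l.length < r)
    (b : Fin t) : (gluedTree r n t).Adj (vertexAt i l) (vertexAt i (l ++ [b])) := by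
  unfold vertexAt
  rw [dif_pos hl]
  split_ifs with h
  · simp [gluedTree, gluedAdj]
  · simp only [length_append, length_singleton] at h
    simp [gluedTree, gluedAdj, take_of_length_le (l := l ++ [b]) (by simp; omega)]

theorem label_adj {x y : gluedVert r n t} (h : (gluedTree r n t).Adj x y) :
    (∃ b, label y = label x ++ [b]) ∨ ∃ b, label x = label y ++ [b] := by
  rcases x with ⟨i, s⟩ | l <;> rcases y with ⟨j, s'⟩ | l' <;>
    simp [gluedTree, gluedAdj, label] at h ⊢ <;> tauto

theorem vertexAt_mem_quasiLeaves (i : Fin n) {l : List (Fin t)} (hl : r ≤ l.length) :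
    vertexAt i l ∈ quasiLeaves r n t := by
  simp [vertexAt, quasiLeaves, not_lt.2 hl, hl]

theorem inl_notMem_quasiLeaves (x : Fin n × {l : List (Fin t) // l.length < r}) :
    Sum.inl x ∉ quasiLeaves r n t := by
  simp [quasiLeaves]

theorem exists_walk_take_vertexAt (i : Fin n) {l : List (Fin t)} (hl : l.length ≤ r) {k : ℕ}
    (hk : k ≤ l.length) :
    ∃ p : (gluedTree r n t).Walk (vertexAt i (l.take k)) (vertexAt i l),
      p.length = l.length - k ∧
      ∀ j, k ≤ j → j ≤ l.length → vertexAt i (l.take j) ∈ p.support := by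
  induction h : l.length - k generalizing k with
  | zero =>
    obtain rfl : k = l.length := by omega
    rw [take_length]
    refine ⟨.nil, rfl, fun j hj hj' => ?_⟩
    simp [show j = l.length by omega]
  | succ d ih =>
    obtain ⟨p, hp, hsupp⟩ := ih (k := k + 1) (by omega) (by omega)
    have hadj : (gluedTree r n t).Adj (vertexAt i (l.take k)) (vertexAt i (l.take (k + 1))) := by
      rw [take_add_one, getElem?_eq_getElem (by omega), Option.toList_some]
      exact adj_vertexAt_append_singleton i (by rw [length_take]; omega) _
    refine ⟨.cons hadj p, by rw [Walk.length_cons, hp], fun j hj hj' => ?_⟩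
    rcases hj.eq_or_lt with rfl | hlt
    · simp
    · exact Walk.support_cons hadj p ▸ mem_cons_of_mem _ (hsupp j hlt hj')

theorem exists_walk_vertexAt (i : Fin n) {a b : List (Fin t)} (ha : a.length ≤ r)
    (hb : b.length ≤ r) :
    ∃ p : (gluedTree r n t).Walk (vertexAt i a) (vertexAt i b),
      p.length = treeDist a b ∧
      ∀ j, lcp a b ≤ j → j ≤ b.length → vertexAt i (b.take j) ∈ p.support := by
  obtain ⟨p, hp, -⟩ := exists_walk_take_vertexAt i ha (lcp_le_length_left a b)
  obtain ⟨q, hq, hsupp⟩ := exists_walk_take_vertexAt i hb (lcp_le_length_right a b)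
  refine ⟨p.reverse.append (q.copy (by rw [take_lcp]) rfl), by simp [hp, hq, treeDist],
    fun j hj hj' => ?_⟩
  simp [Walk.mem_support_append_iff, hsupp j hj hj']

theorem treeDist_label_le_length (m : List (Fin t)) {x y : gluedVert r n t}
    (p : (gluedTree r n t).Walk x y) : treeDist m (label y) ≤ treeDist m (label x) + p.length := by
  induction p with
  | nil => simp
  | @cons u v w h p ih =>
    have hstep : treeDist m (label v) ≤ treeDist m (label u) + 1 := by
      rcases label_adj h with ⟨b, hb⟩ | ⟨b, hb⟩
      · exact hb ▸ (treeDist_append_singleton_le m _ b).1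
      · exact hb ▸ (treeDist_append_singleton_le m _ b).2
    rw [Walk.length_cons]
    omega

theorem dist_vertexAt (i : Fin n) {a b : List (Fin t)} (ha : a.length ≤ r) (hb : b.length ≤ r) :
    (gluedTree r n t).dist (vertexAt i a) (vertexAt i b) = treeDist a b := by
  obtain ⟨p, hp, -⟩ := exists_walk_vertexAt i ha hb
  obtain ⟨q, hq⟩ := p.reachable.exists_walk_length_eq_dist
  have := treeDist_label_le_length a q
  rw [label_vertexAt i ha, label_vertexAt i hb, treeDist_self] at this
  exact le_antisymm (hp ▸ dist_le p) (by omega)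

theorem dist_eq_treeDist {i : Fin n} {x y : gluedVert r n t} (hx : x ∈ copySet r n t i)
    (hy : y ∈ copySet r n t i) :
    (gluedTree r n t).dist x y = treeDist (label x) (label y) := by
  rw [← dist_vertexAt i (length_label_le x) (length_label_le y), vertexAt_label hx,
    vertexAt_label hy]

theorem quasiLeaves_isOuterGPSet [NeZero n] :
    isOuterGPSet (gluedTree r n t) (quasiLeaves r n t) := by
  refine isOuterGPSet_iff.2 fun u hu v p _ hp w hw hwQ => ?_
  obtain ⟨i, hv⟩ := exists_mem_copySet v
  have hui := quasiLeaves_subset_copySet i hu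
  have hwi := quasiLeaves_subset_copySet i hwQ
  have hsplit := p.dist_add_dist_le_length hw
  rw [hp, dist_eq_treeDist hui hwi, dist_eq_treeDist hwi hv, dist_eq_treeDist hui hv] at hsplit
  rcases eq_or_eq_of_treeDist_add_le (length_label_of_mem_quasiLeaves hu)
    (length_label_of_mem_quasiLeaves hwQ) (length_label_le v) hsplit with h | h
  · exact .inl (eq_of_label_eq hwi hui h)
  · exact .inr (eq_of_label_eq hwi hv h)

theorem eq_of_inl_mem_of_isOuterGPSet [Nontrivial (Fin t)] {S : Set (gluedVert r n t)}
    (hS : isOuterGPSet (gluedTree r n t) S) {i : Fin n} {s : {l : List (Fin t) // l.length < r}}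
    (hs : Sum.inl (i, s) ∈ S) {u : gluedVert r n t} (hu : u ∈ S) (hui : u ∈ copySet r n t i) :
    u = Sum.inl (i, s) := by
  obtain ⟨v, hvr, hsv, hlcp⟩ := exists_isPrefix_lcp_le (label u) s.1 s.2
  obtain ⟨p, hp, hsupp⟩ := exists_walk_vertexAt i (length_label_le u) hvr.le
  have hvertex : vertexAt i s.1 = Sum.inl (i, s) := vertexAt_label (x := .inl (i, s)) (.inl ⟨s, rfl⟩)
  have hmem : Sum.inl (i, s) ∈ p.support := by
    simpa [← prefix_iff_eq_take.1 hsv, hvertex] using hsupp _ hlcp hsv.length_le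
  set q := p.copy (vertexAt_label hui) rfl
  have hq : q.length = (gluedTree r n t).dist u (vertexAt i v) := by
    rw [Walk.length_copy, hp, ← dist_vertexAt i (length_label_le u) hvr.le, vertexAt_label hui]
  rcases isOuterGPSet_iff.1 hS u hu (vertexAt i v) q (q.isPath_of_length_eq_dist hq) hq _
    (by simpa [q] using hmem) hs with h | h
  · exact h.symm
  · exact absurd (h ▸ vertexAt_mem_quasiLeaves i hvr.ge) (inl_notMem_quasiLeaves _)

theorem subset_quasiLeaves_or_ncard_le [Nontrivial (Fin t)] {S : Set (gluedVert r n t)}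
    (hS : isOuterGPSet (gluedTree r n t) S) : S ⊆ quasiLeaves r n t ∨ S.ncard ≤ n := by
  refine or_iff_not_imp_left.2 fun hQ => ?_
  obtain ⟨w, hwS, hwQ⟩ := Set.not_subset.1 hQ
  obtain ⟨i, s⟩ | l := w
  swap
  · exact absurd ⟨l, rfl⟩ hwQ
  have hinl : ∀ x ∈ S, ∃ j s', x = Sum.inl (j, s') := by
    rintro (⟨j, s'⟩ | l) hx
    · exact ⟨j, s', rfl⟩
    · cases eq_of_inl_mem_of_isOuterGPSet hS hwS hx (quasiLeaves_subset_copySet i ⟨l, rfl⟩)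
  have hinj : S.InjOn (Sum.elim Prod.fst fun _ => i) := by
    intro x hx y hy hxy
    obtain ⟨j, s', rfl⟩ := hinl x hx
    obtain ⟨k, s'', rfl⟩ := hinl y hy
    obtain rfl : j = k := hxy
    exact (eq_of_inl_mem_of_isOuterGPSet hS hx hy (.inl ⟨s'', rfl⟩)).symm
  simpa using Set.ncard_le_ncard_of_injOn _ (fun _ _ => Set.mem_univ _) hinj Set.finite_univ

theorem quasiLeaves_eq_range : quasiLeaves r n t = Set.range Sum.inr := by
  ext x
  simp [quasiLeaves, eq_comm]

theorem ncard_quasiLeaves : (quasiLeaves r n t).ncard = t ^ r := by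
  rw [quasiLeaves_eq_range, ← Nat.card_coe_set_eq, Nat.card_range_of_injective Sum.inr_injective]
  change Nat.card (List.Vector (Fin t) r) = t ^ r
  rw [Nat.card_eq_fintype_card, card_vector, Fintype.card_fin]

theorem finite_quasiLeaves : (quasiLeaves r n t).Finite :=
  have : Finite {l : List (Fin t) // l.length = r} := inferInstanceAs (Finite (List.Vector _ _))
  quasiLeaves_eq_range ▸ Set.finite_range _

end gluedTree

theorem stmt12 (r : ℕ) (hr : 2 ≤ r) :
    IsGreatest {k : ℕ | ∃ S : Set (gluedVert r 2 2),
      isOuterGPSet (gluedTree r 2 2) S ∧ S.ncard = k} (2 ^ r) ∧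
    ∀ S : Set (gluedVert r 2 2),
      isOuterGPSet (gluedTree r 2 2) S → S.ncard = 2 ^ r → S = quasiLeaves r 2 2 := by
  have hcard : (quasiLeaves r 2 2).ncard = 2 ^ r := gluedTree.ncard_quasiLeaves
  have htwo : 2 < 2 ^ r := lt_of_lt_of_le (by norm_num) (Nat.pow_le_pow_right two_pos hr)
  refine ⟨⟨⟨_, gluedTree.quasiLeaves_isOuterGPSet, hcard⟩, ?_⟩, fun S hS hS' => ?_⟩
  · rintro k ⟨S, hS, rfl⟩
    rcases gluedTree.subset_quasiLeaves_or_ncard_le hS with hQ | hle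
    · exact hcard ▸ Set.ncard_le_ncard hQ gluedTree.finite_quasiLeaves
    · omega
  · rcases gluedTree.subset_quasiLeaves_or_ncard_le hS with hQ | hle
    · exact Set.eq_of_subset_of_ncard_le hQ (by omega) gluedTree.finite_quasiLeaves
    · omega
end
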